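/- arXiv:2406.17718 — 6 statements merged into one kernel-verified Lean document; each statement's English description precedes it below -/
import Mathlib

section
/- Let P ∈ ℝ^{n×n} and let Φ ∈ ℝ^{n×k} be such that ΦᵀΦ is invertible. If the columns of Φ span an invariant subspace of P, i.e. there exists A ∈ ℝ^{k×k} with PΦ = ΦA, then Φ is a stationary point of the two-timescale latent self-prediction flow: with F*(Φ) = (ΦᵀΦ)⁻¹ΦᵀPΦ one has (I − Φ(ΦᵀΦ)⁻¹Φᵀ) P Φ (F*(Φ))ᵀ = 0. -/
open Matrix

/-- **Stationarity of invariant subspaces for the two-timescale latent self-prediction flow.**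
If the columns of `Φ` span an invariant subspace of `P` (i.e. `P * Φ = Φ * A`) and `Φᵀ * Φ` is
invertible, then `Φ` is a stationary point of the flow
`G(Φ) = (I − Φ(ΦᵀΦ)⁻¹Φᵀ) P Φ (F*(Φ))ᵀ` with `F*(Φ) = (ΦᵀΦ)⁻¹ΦᵀPΦ`. -/
theorem stmt0 {n k : ℕ} (P : Matrix (Fin n) (Fin n) ℝ)
    (Φ : Matrix (Fin n) (Fin k) ℝ)
    (hinv : IsUnit (Φᵀ * Φ))
    (A : Matrix (Fin k) (Fin k) ℝ) (hA : P * Φ = Φ * A) :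
    (1 - Φ * (Φᵀ * Φ)⁻¹ * Φᵀ) * P * Φ * ((Φᵀ * Φ)⁻¹ * Φᵀ * P * Φ)ᵀ = 0 := by
  have key : (1 - Φ * (Φᵀ * Φ)⁻¹ * Φᵀ) * P * Φ = 0 := by
    have h1 : (Φᵀ * Φ)⁻¹ * (Φᵀ * Φ) = 1 :=
      nonsing_inv_mul _ ((isUnit_iff_isUnit_det _).mp hinv)
    rw [sub_mul, Matrix.sub_mul, one_mul, Matrix.mul_assoc _ P Φ, hA,
      show Φ * (Φᵀ * Φ)⁻¹ * Φᵀ * (Φ * A) = Φ * ((Φᵀ * Φ)⁻¹ * (Φᵀ * Φ)) * A by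
        simp only [Matrix.mul_assoc],
      h1, Matrix.mul_one, sub_self]
  rw [key, Matrix.zero_mul]
end

section
/- Let P ∈ ℝ^{n×n} and let Φ ∈ ℝ^{n×k} have orthonormal columns (ΦᵀΦ = I_k) each of which is an eigenvector of P, so that PΦ = Φ·diag(λ₁,…,λ_k). Let v ∈ ℝⁿ be a nonzero vector with Pv = λv and Φᵀv = 0. Let G(Φ) = (I − Φ(ΦᵀΦ)⁻¹Φᵀ) P Φ ((ΦᵀΦ)⁻¹ΦᵀPΦ)ᵀ, defined on the open set of matrices with ΦᵀΦ invertible. Then for each index i, taking the direction Δ = v eᵢᵀ (where eᵢ is the i-th standard basis vector of ℝ^k), the directional derivative of G at Φ in direction Δ, i.e. (d/dε) G(Φ + εΔ) at ε = 0, equals (λλᵢ − λᵢ²)·Δ. In particular, if 0 < λᵢ < λ then Δ is an eigendirection of the linearization of the flow at Φ with strictly positive eigenvalue, so the stationary point Φ is linearly unstable. -/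
open Matrix

attribute [local instance] Matrix.normedAddCommGroup Matrix.normedSpace

/-!
Write `PΦ = ΦD` with `D = diag λ`, and `Δ = v uᵀ` with `u = eᵢ`, so `uᵀD = λᵢ uᵀ`. Since `Φᵀv = 0`
and `Pv = λ₀v`, everything along the line `Φ + εΔ` stays in the span of `Φ` and `Δ`: the Gram
matrix is `1 + s E` with `s = ε²|v|²` and `E = u uᵀ` idempotent, so its inverse is `1 - t E` with
`t = s/(1 + s) = O(ε²)`. Hence `F*(Φ + εΔ) = D + t(λ₀ - λᵢ) E`, and `G(Φ + εΔ)` is an explicit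
combination `ε a(ε) Δ - b(ε) Φ E` with `a(0) = (λ₀ - λᵢ) λᵢ` and `b = O(ε²)`.
-/

noncomputable section

section LatentFlow

variable {K m k : Type*} [Field K] [Fintype m] [Fintype k] [DecidableEq k]

/-- `F*(X)` in the paper's notation; `latentFlow P X` is `G(X)`. -/
def latentPredictor (P : Matrix m m K) (X : Matrix m k K) : Matrix k k K :=
  (Xᵀ * X)⁻¹ * Xᵀ * P * X

theorem latentPredictor_eq (P : Matrix m m K) (X : Matrix m k K) :
    latentPredictor P X = (Xᵀ * X)⁻¹ * (Xᵀ * P * X) := by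
  simp only [latentPredictor, Matrix.mul_assoc]

variable [DecidableEq m]

def latentFlow (P : Matrix m m K) (X : Matrix m k K) : Matrix m k K :=
  (1 - X * (Xᵀ * X)⁻¹ * Xᵀ) * P * X * (latentPredictor P X)ᵀ

theorem latentFlow_eq (P : Matrix m m K) (X : Matrix m k K) :
    latentFlow P X = (P * X - X * latentPredictor P X) * (latentPredictor P X)ᵀ := by
  simp only [latentFlow, latentPredictor, Matrix.sub_mul, Matrix.one_mul, Matrix.mul_assoc]

end LatentFlow

section VecMulVec

variable {R l m k : Type*} [CommRing R] [Fintype m]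

theorem mul_vecMulVec_of_mulVec_eq_zero {A : Matrix l m R} {v : m → R} (hv : A *ᵥ v = 0)
    (u : k → R) : A * vecMulVec v u = 0 := by
  rw [mul_vecMulVec, hv, zero_vecMulVec]

theorem vecMulVec_transpose_mul_of_mulVec_eq_zero {A : Matrix m k R} {v : m → R}
    (hv : Aᵀ *ᵥ v = 0) (u : l → R) : (vecMulVec v u)ᵀ * A = 0 := by
  simpa using congrArg transpose (mul_vecMulVec_of_mulVec_eq_zero hv u)

theorem vecMulVec_transpose_mul_self (v : m → R) (u : k → R) :
    (vecMulVec v u)ᵀ * vecMulVec v u = (v ⬝ᵥ v) • vecMulVec u u := by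
  rw [transpose_vecMulVec, vecMulVec_mul_vecMulVec, vecMulVec_smul]

theorem vecMulVec_mul_vecMulVec_of_dotProduct_eq_one {u : m → R} (hu : u ⬝ᵥ u = 1)
    (v : l → R) : vecMulVec v u * vecMulVec u u = vecMulVec v u := by
  rw [vecMulVec_mul_vecMulVec, hu, one_smul]

theorem vecMulVec_mul_of_vecMul_eq {D : Matrix m m R} {u : m → R} {μ : R}
    (huD : u ᵥ* D = μ • u) (v : l → R) : vecMulVec v u * D = μ • vecMulVec v u := by
  rw [vecMulVec_mul, huD, vecMulVec_smul]

end VecMulVec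

theorem Matrix.inv_one_add_smul_of_mul_self {K k : Type*} [Field K] [Fintype k] [DecidableEq k]
    {E : Matrix k k K} (hE : E * E = E) {s : K} (hs : 1 + s ≠ 0) :
    (1 + s • E)⁻¹ = 1 - (s / (1 + s)) • E := by
  refine inv_eq_right_inv ?_
  have hcoef : s - s / (1 + s) - s * (s / (1 + s)) = 0 := by field_simp; ring
  calc (1 + s • E) * (1 - (s / (1 + s)) • E)
      = 1 + (s - s / (1 + s) - s * (s / (1 + s))) • E := by
        simp only [Matrix.add_mul, Matrix.mul_sub, Matrix.mul_one, Matrix.one_mul,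
          Matrix.smul_mul, Matrix.mul_smul, hE]
        module
    _ = 1 := by rw [hcoef, zero_smul, add_zero]

section Perturbation

variable {K m k : Type*} [Field K] [Fintype m]
  {P : Matrix m m K} {Φ : Matrix m k K} {D : Matrix k k K} {v : m → K} {lam0 : K}

theorem gram_add_smul_vecMulVec [DecidableEq k] (horth : Φᵀ * Φ = 1) (hv : Φᵀ *ᵥ v = 0)
    (u : k → K) (ε : K) :
    (Φ + ε • vecMulVec v u)ᵀ * (Φ + ε • vecMulVec v u) =
      1 + (ε ^ 2 * (v ⬝ᵥ v)) • vecMulVec u u := by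
  simp only [transpose_add, transpose_smul, Matrix.add_mul, Matrix.mul_add, Matrix.smul_mul,
    Matrix.mul_smul, horth, mul_vecMulVec_of_mulVec_eq_zero hv,
    vecMulVec_transpose_mul_of_mulVec_eq_zero hv, vecMulVec_transpose_mul_self]
  module

theorem mul_add_smul_vecMulVec [Fintype k] (heig : P * Φ = Φ * D) (hPv : P *ᵥ v = lam0 • v)
    (u : k → K) (ε : K) :
    P * (Φ + ε • vecMulVec v u) = Φ * D + (ε * lam0) • vecMulVec v u := by
  rw [Matrix.mul_add, heig, Matrix.mul_smul, mul_vecMulVec, hPv, smul_vecMulVec, smul_smul]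

theorem quadForm_add_smul_vecMulVec [Fintype k] [DecidableEq k] (horth : Φᵀ * Φ = 1)
    (heig : P * Φ = Φ * D) (hPv : P *ᵥ v = lam0 • v) (hv : Φᵀ *ᵥ v = 0) (u : k → K) (ε : K) :
    (Φ + ε • vecMulVec v u)ᵀ * P * (Φ + ε • vecMulVec v u) =
      D + (ε ^ 2 * (v ⬝ᵥ v) * lam0) • vecMulVec u u := by
  rw [Matrix.mul_assoc, mul_add_smul_vecMulVec heig hPv]
  simp only [transpose_add, transpose_smul, Matrix.add_mul, Matrix.mul_add, Matrix.smul_mul,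
    Matrix.mul_smul, ← Matrix.mul_assoc, horth, Matrix.one_mul,
    mul_vecMulVec_of_mulVec_eq_zero hv, vecMulVec_transpose_mul_of_mulVec_eq_zero hv,
    vecMulVec_transpose_mul_self, Matrix.zero_mul]
  module

theorem latentPredictor_add_smul_vecMulVec [DecidableEq m] [Fintype k] [DecidableEq k]
    (horth : Φᵀ * Φ = 1) (heig : P * Φ = Φ * D) (hPv : P *ᵥ v = lam0 • v) (hv : Φᵀ *ᵥ v = 0)
    {u : k → K} (hu : u ⬝ᵥ u = 1) {μ : K} (huD : u ᵥ* D = μ • u) {ε : K}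
    (hε : 1 + ε ^ 2 * (v ⬝ᵥ v) ≠ 0) :
    latentPredictor P (Φ + ε • vecMulVec v u) =
      D + (ε ^ 2 * (v ⬝ᵥ v) / (1 + ε ^ 2 * (v ⬝ᵥ v)) * (lam0 - μ)) • vecMulVec u u := by
  have hE := vecMulVec_mul_vecMulVec_of_dotProduct_eq_one hu u
  rw [latentPredictor_eq, gram_add_smul_vecMulVec horth hv,
    quadForm_add_smul_vecMulVec horth heig hPv hv, Matrix.inv_one_add_smul_of_mul_self hE hε]
  set s := ε ^ 2 * (v ⬝ᵥ v)
  have hcoef :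
      s * lam0 - s / (1 + s) * μ - s / (1 + s) * (s * lam0) = s / (1 + s) * (lam0 - μ) := by
    field_simp
    ring
  simp only [Matrix.sub_mul, Matrix.mul_add, Matrix.one_mul, Matrix.smul_mul, Matrix.mul_smul, hE,
    vecMulVec_mul_of_vecMul_eq huD, smul_smul, ← hcoef]
  module

theorem latentFlow_add_smul_vecMulVec [DecidableEq m] [Fintype k] [DecidableEq k]
    (horth : Φᵀ * Φ = 1) (heig : P * Φ = Φ * D) (hD : Dᵀ = D) (hPv : P *ᵥ v = lam0 • v)
    (hv : Φᵀ *ᵥ v = 0) {u : k → K} (hu : u ⬝ᵥ u = 1) {μ : K} (huD : u ᵥ* D = μ • u) {ε : K}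
    (hε : 1 + ε ^ 2 * (v ⬝ᵥ v) ≠ 0) :
    let t := ε ^ 2 * (v ⬝ᵥ v) / (1 + ε ^ 2 * (v ⬝ᵥ v))
    latentFlow P (Φ + ε • vecMulVec v u) =
      (ε * (1 - t) * (lam0 - μ) * (μ + t * (lam0 - μ))) • vecMulVec v u -
        (t * (lam0 - μ) * (μ + t * (lam0 - μ))) • (Φ * vecMulVec u u) := by
  intro t
  rw [latentFlow_eq, latentPredictor_add_smul_vecMulVec horth heig hPv hv hu huD hε,
    transpose_add, transpose_smul, hD, transpose_vecMulVec, mul_add_smul_vecMulVec heig hPv]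
  simp only [Matrix.sub_mul, Matrix.mul_add, Matrix.add_mul, Matrix.smul_mul, Matrix.mul_smul,
    Matrix.mul_assoc, vecMulVec_mul_vecMulVec_of_dotProduct_eq_one hu,
    vecMulVec_mul_of_vecMul_eq huD, smul_smul, t]
  module

end Perturbation

theorem hasDerivAt_sq_mul_div_one_add_sq_mul (c : ℝ) :
    HasDerivAt (fun ε : ℝ => ε ^ 2 * c / (1 + ε ^ 2 * c)) 0 0 := by
  have hsq : HasDerivAt (fun ε : ℝ => ε ^ 2 * c) 0 0 := by
    simpa using (hasDerivAt_pow 2 (0 : ℝ)).mul_const c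
  simpa using hsq.fun_div (hsq.const_add 1) (by simp)

theorem hasDerivAt_latentFlow_closedForm {V : Type*} [NormedAddCommGroup V] [NormedSpace ℝ V]
    {t : ℝ → ℝ} (ht : HasDerivAt t 0 0) (ht0 : t 0 = 0) (a μ : ℝ) (X Y : V) :
    HasDerivAt (fun ε => (ε * (1 - t ε) * a * (μ + t ε * a)) • X -
      (t ε * a * (μ + t ε * a)) • Y) ((a * μ) • X) 0 := by
  have hg : HasDerivAt (fun ε => μ + t ε * a) 0 0 := by simpa using (ht.mul_const a).const_add μ
  have hX : HasDerivAt (fun ε => ε * (1 - t ε) * a * (μ + t ε * a)) (a * μ) 0 := by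
    refine ((((hasDerivAt_id' 0).fun_mul (ht.const_sub 1)).mul_const a).fun_mul hg).congr_deriv ?_
    simp [ht0, mul_comm]
  have hY : HasDerivAt (fun ε => t ε * a * (μ + t ε * a)) 0 0 := by
    refine ((ht.mul_const a).fun_mul hg).congr_deriv ?_
    simp [ht0]
  simpa using (hX.smul_const X).fun_sub (hY.smul_const Y)

end

theorem stmt1_general {n k : ℕ} (P : Matrix (Fin n) (Fin n) ℝ)
    (Φ : Matrix (Fin n) (Fin k) ℝ) (lam : Fin k → ℝ)
    (horth : Φᵀ * Φ = 1) (heig : P * Φ = Φ * Matrix.diagonal lam)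
    (v : Fin n → ℝ) (lam0 : ℝ)
    (hPv : P *ᵥ v = lam0 • v) (hoΦ : Φᵀ *ᵥ v = 0)
    (G : Matrix (Fin n) (Fin k) ℝ → Matrix (Fin n) (Fin k) ℝ)
    (hG : G = fun Φ' => (1 - Φ' * (Φ'ᵀ * Φ')⁻¹ * Φ'ᵀ) * P * Φ' * ((Φ'ᵀ * Φ')⁻¹ * Φ'ᵀ * P * Φ')ᵀ)
    (i : Fin k) (Δ : Matrix (Fin n) (Fin k) ℝ)
    (hΔ : Δ = Matrix.vecMulVec v (Pi.single i 1)) :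
    HasDerivAt (fun ε : ℝ => G (Φ + ε • Δ)) ((lam0 * lam i - (lam i) ^ 2) • Δ) 0 ∧
    (0 < lam i → lam i < lam0 → 0 < lam0 * lam i - (lam i) ^ 2) := by
  subst hG hΔ
  have hu : Pi.single i (1 : ℝ) ⬝ᵥ Pi.single i 1 = 1 := by simp
  have huD : Pi.single i (1 : ℝ) ᵥ* diagonal lam = lam i • Pi.single i 1 := by
    rw [single_vecMul_diagonal, ← Pi.single_smul, smul_eq_mul, one_mul, mul_one]
  have hε (ε : ℝ) : 1 + ε ^ 2 * (v ⬝ᵥ v) ≠ 0 := by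
    have : 0 ≤ v ⬝ᵥ v := by simpa using dotProduct_star_self_nonneg v
    positivity
  refine ⟨?_, fun hpos hlt => by nlinarith⟩
  rw [show lam0 * lam i - lam i ^ 2 = (lam0 - lam i) * lam i by ring]
  refine (hasDerivAt_latentFlow_closedForm (hasDerivAt_sq_mul_div_one_add_sq_mul (v ⬝ᵥ v))
    (by simp) _ _ _ (Φ * vecMulVec (Pi.single i (1 : ℝ)) (Pi.single i 1))).congr_of_eventuallyEq
    (Filter.Eventually.of_forall fun ε => ?_)
  exact latentFlow_add_smul_vecMulVec horth heig (diagonal_transpose lam) hPv hoΦ hu huD (hε ε)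

/-- **Instability of non-top-k eigenvector stationary points.**
Let `Φ` have orthonormal columns which are eigenvectors of `P` (so `PΦ = Φ diag(λ)`), and let
`v ≠ 0` be an eigenvector of `P` with eigenvalue `λ₀` orthogonal to the columns of `Φ`.
Then for the direction `Δ = v eᵢᵀ`, the directional derivative of the two-timescale latent
self-prediction flow field `G` at `Φ` in direction `Δ` equals `(λ₀ λᵢ − λᵢ²) • Δ`; in particular
if `0 < λᵢ < λ₀` this eigenvalue of the linearization is strictly positive, so `Φ` is linearly
unstable. -/
theorem stmt1 {n k : ℕ} (P : Matrix (Fin n) (Fin n) ℝ)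
    (Φ : Matrix (Fin n) (Fin k) ℝ) (lam : Fin k → ℝ)
    (horth : Φᵀ * Φ = 1) (heig : P * Φ = Φ * Matrix.diagonal lam)
    (v : Fin n → ℝ) (hv : v ≠ 0) (lam0 : ℝ)
    (hPv : P *ᵥ v = lam0 • v) (hoΦ : Φᵀ *ᵥ v = 0)
    (G : Matrix (Fin n) (Fin k) ℝ → Matrix (Fin n) (Fin k) ℝ)
    (hG : G = fun Φ' => (1 - Φ' * (Φ'ᵀ * Φ')⁻¹ * Φ'ᵀ) * P * Φ' * ((Φ'ᵀ * Φ')⁻¹ * Φ'ᵀ * P * Φ')ᵀ)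
    (i : Fin k) (Δ : Matrix (Fin n) (Fin k) ℝ)
    (hΔ : Δ = Matrix.vecMulVec v (Pi.single i 1)) :
    HasDerivAt (fun ε : ℝ => G (Φ + ε • Δ)) ((lam0 * lam i - (lam i) ^ 2) • Δ) 0 ∧
    (0 < lam i → lam i < lam0 → 0 < lam0 * lam i - (lam i) ^ 2) :=
  stmt1_general P Φ lam horth heig v lam0 hPv hoΦ G hG i Δ hΔ
end

section
/- Let P ∈ ℝ^{n×n}, let O ∈ ℝ^{n×n} be invertible, and let Φ* ∈ ℝ^{n×k} with Φ*ᵀΦ* invertible be a stationary point of the two-timescale latent self-prediction flow for P, i.e. (I − Φ*(Φ*ᵀΦ*)⁻¹Φ*ᵀ) P Φ* (F*)ᵀ = 0 where F* = (Φ*ᵀΦ*)⁻¹Φ*ᵀPΦ*. Set Φ̃ = O⁻¹Φ* and F̃ = (Φ̃ᵀOᵀOΦ̃)⁻¹ Φ̃ᵀOᵀPOΦ̃. Then F̃ = F* and Oᵀ(OΦ̃F̃ − POΦ̃)F̃ᵀ = 0; that is, Φ̃ = O⁻¹Φ* is a stationary point of the two-timescale latent self-prediction flow for the reparameterized loss in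 which every occurrence of Φ is replaced by OΦ. -/
open Matrix

/-- **Reparameterization invariance of latent self-prediction stationary points.**
If `Φ*` (with `Φ*ᵀΦ*` invertible) is a stationary point of the two-timescale latent
self-prediction flow for `P`, and `O` is an invertible observation matrix, then with
`Φ̃ = O⁻¹Φ*` and `F̃ = (Φ̃ᵀOᵀOΦ̃)⁻¹Φ̃ᵀOᵀPOΦ̃` we have `F̃ = F*` (where
`F* = (Φ*ᵀΦ*)⁻¹Φ*ᵀPΦ*`) and `Oᵀ(OΦ̃F̃ − POΦ̃)F̃ᵀ = 0`, i.e. `Φ̃` is a stationary point of the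
two-timescale flow of the reparameterized loss in which every occurrence of `Φ` is replaced
by `OΦ`. -/
theorem stmt4 {n k : ℕ} (P O : Matrix (Fin n) (Fin n) ℝ) (hO : IsUnit O)
    (Φs : Matrix (Fin n) (Fin k) ℝ) (hΦ : IsUnit (Φsᵀ * Φs))
    (hstat : (1 - Φs * (Φsᵀ * Φs)⁻¹ * Φsᵀ) * P * Φs * ((Φsᵀ * Φs)⁻¹ * Φsᵀ * P * Φs)ᵀ = 0)
    (Φt : Matrix (Fin n) (Fin k) ℝ) (hΦt : Φt = O⁻¹ * Φs)
    (Ft : Matrix (Fin k) (Fin k) ℝ)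
    (hFt : Ft = (Φtᵀ * Oᵀ * O * Φt)⁻¹ * (Φtᵀ * Oᵀ * P * O * Φt)) :
    Ft = (Φsᵀ * Φs)⁻¹ * Φsᵀ * P * Φs ∧
    Oᵀ * (O * Φt * Ft - P * O * Φt) * Ftᵀ = 0 := by
  have hdet : IsUnit O.det := (Matrix.isUnit_iff_isUnit_det O).mp hO
  have hOΦ : O * Φt = Φs := by
    rw [hΦt, ← Matrix.mul_assoc, Matrix.mul_nonsing_inv O hdet, Matrix.one_mul]
  have hF : Ft = (Φsᵀ * Φs)⁻¹ * Φsᵀ * P * Φs := by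
    have h1 : Φtᵀ * Oᵀ = Φsᵀ := by rw [← Matrix.transpose_mul, hOΦ]
    rw [hFt, show Φtᵀ * Oᵀ * O * Φt = Φtᵀ * Oᵀ * (O * Φt) from by rw [Matrix.mul_assoc],
      show Φtᵀ * Oᵀ * P * O * Φt = Φtᵀ * Oᵀ * (P * (O * Φt)) from by
        simp only [Matrix.mul_assoc], hOΦ, h1]
    simp only [Matrix.mul_assoc]
  refine ⟨hF, ?_⟩
  rw [hF, Matrix.mul_assoc P O Φt, hOΦ]
  simp only [Matrix.sub_mul, Matrix.one_mul, Matrix.mul_assoc] at hstat ⊢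
  rw [sub_eq_zero] at hstat
  rw [← hstat, sub_self, Matrix.mul_zero]
end

section
/- Let P ∈ ℝ^{n×n}, γ ∈ (0,1), and r ∈ ℝⁿ. Let Φ ∈ ℝ^{n×k} satisfy ΦᵀΦ = I_k, suppose there exists B ∈ ℝ^{k×k} with PΦ = ΦB, and suppose ΦΦᵀ r = r. If I − γP and I − γΦᵀPΦ are both invertible, then Φ (I − γΦᵀPΦ)⁻¹ Φᵀ r = (I − γP)⁻¹ r. -/
open Matrix

/-- **Lossless approximation of the value function.**
If `Φ` has orthonormal columns spanning an invariant subspace of `P` (`PΦ = ΦB`) and the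
reward `r` lies in the column span of `Φ` (`ΦΦᵀr = r`), then
`Φ (I − γΦᵀPΦ)⁻¹ Φᵀ r = (I − γP)⁻¹ r`. -/
theorem stmt9 {n k : ℕ} (P : Matrix (Fin n) (Fin n) ℝ) (γ : ℝ) (hγ : γ ∈ Set.Ioo (0 : ℝ) 1)
    (r : Fin n → ℝ) (Φ : Matrix (Fin n) (Fin k) ℝ)
    (horth : Φᵀ * Φ = 1) (B : Matrix (Fin k) (Fin k) ℝ) (hB : P * Φ = Φ * B)
    (hr : (Φ * Φᵀ) *ᵥ r = r)
    (hinv1 : IsUnit (1 - γ • P))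
    (hinv2 : IsUnit ((1 : Matrix (Fin k) (Fin k) ℝ) - γ • (Φᵀ * P * Φ))) :
    Φ *ᵥ ((1 - γ • (Φᵀ * P * Φ))⁻¹ *ᵥ (Φᵀ *ᵥ r)) = (1 - γ • P)⁻¹ *ᵥ r := by
  have hB' : Φᵀ * P * Φ = B := by
    rw [Matrix.mul_assoc, hB, ← Matrix.mul_assoc, horth, Matrix.one_mul]
  have key : (1 - γ • P) * Φ = Φ * (1 - γ • (Φᵀ * P * Φ)) := by
    rw [hB', Matrix.sub_mul, Matrix.mul_sub, Matrix.one_mul, Matrix.mul_one,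
      Matrix.smul_mul, Matrix.mul_smul, hB]
  have hdet1 : IsUnit (1 - γ • P).det := (Matrix.isUnit_iff_isUnit_det _).mp hinv1
  have hdet2 : IsUnit ((1 : Matrix (Fin k) (Fin k) ℝ) - γ • (Φᵀ * P * Φ)).det :=
    (Matrix.isUnit_iff_isUnit_det _).mp hinv2
  have h1 : (1 - γ • P) *ᵥ (Φ *ᵥ ((1 - γ • (Φᵀ * P * Φ))⁻¹ *ᵥ (Φᵀ *ᵥ r))) = r := by
    rw [Matrix.mulVec_mulVec, key, Matrix.mulVec_mulVec, Matrix.mul_assoc,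
      Matrix.mul_nonsing_inv _ hdet2, Matrix.mul_one, Matrix.mulVec_mulVec, hr]
  calc Φ *ᵥ ((1 - γ • (Φᵀ * P * Φ))⁻¹ *ᵥ (Φᵀ *ᵥ r))
      = ((1 - γ • P)⁻¹ * (1 - γ • P)) *ᵥ (Φ *ᵥ ((1 - γ • (Φᵀ * P * Φ))⁻¹ *ᵥ (Φᵀ *ᵥ r))) := by
        rw [Matrix.nonsing_inv_mul _ hdet1, Matrix.one_mulVec]
    _ = (1 - γ • P)⁻¹ *ᵥ r := by rw [← Matrix.mulVec_mulVec, h1]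
end

section
/- Let P ∈ ℝ^{n×n}, γ ∈ (0,1), and r ∈ ℝⁿ. Let Φ ∈ ℝ^{n×k} satisfy ΦᵀΦ = I_k, suppose there exists B ∈ ℝ^{k×k} with PΦ = ΦB, suppose ΦΦᵀ r = r, and suppose I − γP and I − γΦᵀPΦ are invertible. Define V̂ = (I − γΦᵀPΦ)⁻¹ Φᵀ r. Then the TD residual vanishes identically: ΦV̂ − r − γPΦV̂ = 0. Consequently both TD-gradient expressions vanish, Φᵀ(ΦV̂ − r − γPΦV̂) = 0 and (ΦV̂ − r − γPΦV̂)V̂ᵀ = 0, so (Φ, V̂) is a critical point of the TD loss, and moreover ΦV̂ = (I − γP)⁻¹ r, i.e. the value function is represented exactly. -/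
open Matrix

/-- **Critical points of the TD loss with exact value representation.**
If `Φ` has orthonormal columns spanning an invariant subspace of `P` (`PΦ = ΦB`), the reward
`r` lies in the column span of `Φ` (`ΦΦᵀr = r`), and `I − γP`, `I − γΦᵀPΦ` are invertible,
then with `V̂ = (I − γΦᵀPΦ)⁻¹Φᵀr` the TD residual `ΦV̂ − r − γPΦV̂` vanishes identically;
consequently both TD gradient expressions `Φᵀ(ΦV̂ − r − γPΦV̂)` and `(ΦV̂ − r − γPΦV̂)V̂ᵀ`
vanish, so `(Φ, V̂)` is a critical point of the TD loss, and `ΦV̂ = (I − γP)⁻¹r`. -/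
theorem stmt10 {n k : ℕ} (P : Matrix (Fin n) (Fin n) ℝ) (γ : ℝ) (hγ : γ ∈ Set.Ioo (0 : ℝ) 1)
    (r : Fin n → ℝ) (Φ : Matrix (Fin n) (Fin k) ℝ)
    (horth : Φᵀ * Φ = 1) (B : Matrix (Fin k) (Fin k) ℝ) (hB : P * Φ = Φ * B)
    (hr : (Φ * Φᵀ) *ᵥ r = r)
    (hinv1 : IsUnit (1 - γ • P))
    (hinv2 : IsUnit ((1 : Matrix (Fin k) (Fin k) ℝ) - γ • (Φᵀ * P * Φ)))
    (Vhat : Fin k → ℝ) (hV : Vhat = (1 - γ • (Φᵀ * P * Φ))⁻¹ *ᵥ (Φᵀ *ᵥ r)) :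
    Φ *ᵥ Vhat - r - γ • (P *ᵥ (Φ *ᵥ Vhat)) = 0 ∧
    Φᵀ *ᵥ (Φ *ᵥ Vhat - r - γ • (P *ᵥ (Φ *ᵥ Vhat))) = 0 ∧
    Matrix.vecMulVec (Φ *ᵥ Vhat - r - γ • (P *ᵥ (Φ *ᵥ Vhat))) Vhat = 0 ∧
    Φ *ᵥ Vhat = (1 - γ • P)⁻¹ *ᵥ r := by
  have hBk : Φᵀ * P * Φ = B := by
    rw [Matrix.mul_assoc, hB, ← Matrix.mul_assoc, horth, Matrix.one_mul]
  have hinv2' : IsUnit ((1 : Matrix (Fin k) (Fin k) ℝ) - γ • B) := hBk ▸ hinv2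
  have hMV : ((1 : Matrix (Fin k) (Fin k) ℝ) - γ • B) *ᵥ Vhat = Φᵀ *ᵥ r := by
    rw [hV, hBk, Matrix.mulVec_mulVec,
      Matrix.mul_nonsing_inv _ ((Matrix.isUnit_iff_isUnit_det _).mp hinv2'),
      Matrix.one_mulVec]
  have h1 : P *ᵥ (Φ *ᵥ Vhat) = Φ *ᵥ (B *ᵥ Vhat) := by
    rw [Matrix.mulVec_mulVec, hB, ← Matrix.mulVec_mulVec]
  have hres : Φ *ᵥ Vhat - r - γ • (P *ᵥ (Φ *ᵥ Vhat)) = 0 := by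
    have h2 : Φ *ᵥ (((1 : Matrix (Fin k) (Fin k) ℝ) - γ • B) *ᵥ Vhat) = Φ *ᵥ (Φᵀ *ᵥ r) := by
      rw [hMV]
    rw [Matrix.sub_mulVec, Matrix.one_mulVec, Matrix.smul_mulVec,
      Matrix.mulVec_sub, Matrix.mulVec_smul, Matrix.mulVec_mulVec] at h2
    rw [h1, Matrix.mulVec_mulVec, sub_sub, add_comm, ← sub_sub, h2,
      ← Matrix.mulVec_mulVec] at *
    rw [hr, sub_self]
  refine ⟨hres, by rw [hres]; simp, by rw [hres]; ext i j; simp [Matrix.vecMulVec], ?_⟩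
  have key : (1 - γ • P) *ᵥ (Φ *ᵥ Vhat) = r := by
    rw [Matrix.sub_mulVec, Matrix.one_mulVec, Matrix.smul_mulVec]
    have := hres
    rw [sub_sub, add_comm, ← sub_sub, sub_eq_zero] at this
    exact this
  rw [← key, Matrix.mulVec_mulVec,
    Matrix.nonsing_inv_mul _ ((Matrix.isUnit_iff_isUnit_det _).mp hinv1), Matrix.one_mulVec]
end

section
/- Let P ∈ ℝ^{n×n} be real-diagonalizable, i.e. ℝⁿ has a basis w₁,…,w_n of eigenvectors of P. Let γ ∈ (0,1) with I − γP invertible, and suppose r ∈ ℝⁿ lies in the span of m of these eigenvectors with m ≤ k ≤ n. Then there exist Φ ∈ ℝ^{n×k} with ΦᵀΦ = I_k and B ∈ ℝ^{k×k} such that: PΦ = ΦB; ΦΦᵀr = r; I − γΦᵀPΦ is invertible; Φ is a stationary point of the two-timescale latent self-prediction flow, i.e. (I − Φ(ΦᵀΦ)⁻¹Φᵀ) P Φ ((ΦᵀΦ)⁻¹ΦᵀPΦ)ᵀ = 0; and, with V̂ = (I − γΦᵀPΦ)⁻¹Φᵀr, the TD residual vanishes, ΦV̂ − r − γPΦV̂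 = 0, and ΦV̂ = (I − γP)⁻¹r. Hence Φ is simultaneously a critical point of the TD loss and of the latent self-prediction loss, with zero value function approximation error. -/
/-! Choose `t ⊇ s` with `k` elements and let `Φ` have orthonormal columns spanning
`span {wᵢ | i ∈ t}`. This subspace is `P`-invariant and contains `r`, so `PΦ = ΦB` with
`B = ΦᵀPΦ` and `ΦΦᵀr = r`. The intertwining `(I - γP)Φ = Φ(I - γB)` transfers invertibility
to `I - γB` and gives `Φ(I - γB)⁻¹Φᵀr = (I - γP)⁻¹ΦΦᵀr = (I - γP)⁻¹r`, and stationarity is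
`(I - ΦΦᵀ)PΦ = 0`. -/

open Matrix Module

namespace Matrix

variable {R : Type*} [CommRing R] {m k : Type*} [Fintype m] [Fintype k] [DecidableEq k]

theorem mul_transpose_mulVec_of_mem_range {Φ : Matrix m k R} (hΦ : Φᵀ * Φ = 1) {x : m → R}
    (hx : x ∈ LinearMap.range Φ.mulVecLin) : (Φ * Φᵀ) *ᵥ x = x := by
  obtain ⟨y, rfl⟩ := hx
  rw [mulVecLin_apply, mulVec_mulVec, Matrix.mul_assoc, hΦ, Matrix.mul_one]

theorem mul_eq_mul_transpose_mul_mul_of_mapsTo {Φ : Matrix m k R} (hΦ : Φᵀ * Φ = 1)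
    {A : Matrix m m R}
    (hA : ∀ x ∈ LinearMap.range Φ.mulVecLin, A *ᵥ x ∈ LinearMap.range Φ.mulVecLin) :
    A * Φ = Φ * (Φᵀ * A * Φ) := by
  refine ext_of_mulVec_single fun j => ?_
  have hAj : A *ᵥ (Φ *ᵥ Pi.single j 1) ∈ LinearMap.range Φ.mulVecLin :=
    hA _ (LinearMap.mem_range_self _ _)
  calc (A * Φ) *ᵥ Pi.single j 1 = A *ᵥ (Φ *ᵥ Pi.single j 1) := (mulVec_mulVec _ _ _).symm
    _ = (Φ * Φᵀ) *ᵥ (A *ᵥ (Φ *ᵥ Pi.single j 1)) := (mul_transpose_mulVec_of_mem_range hΦ hAj).symm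
    _ = (Φ * (Φᵀ * A * Φ)) *ᵥ Pi.single j 1 := by simp only [mulVec_mulVec, Matrix.mul_assoc]

theorem isUnit_of_mul_eq_mul [DecidableEq m] {Φ : Matrix m k R} {L : Matrix k m R}
    (hL : L * Φ = 1) {M : Matrix m m R} {N : Matrix k k R} (hM : IsUnit M)
    (h : M * Φ = Φ * N) : IsUnit N := by
  rw [isUnit_iff_isUnit_det] at hM ⊢
  refine isUnit_det_of_left_inverse (B := L * M⁻¹ * Φ) ?_
  rw [Matrix.mul_assoc, ← h, Matrix.mul_assoc L, nonsing_inv_mul_cancel_left _ _ hM, hL]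

theorem mul_nonsing_inv_eq_nonsing_inv_mul [DecidableEq m] {Φ : Matrix m k R} {M : Matrix m m R}
    {N : Matrix k k R} (hM : IsUnit M) (hN : IsUnit N) (h : M * Φ = Φ * N) :
    Φ * N⁻¹ = M⁻¹ * Φ := by
  rw [isUnit_iff_isUnit_det] at hM hN
  calc Φ * N⁻¹ = M⁻¹ * (M * Φ) * N⁻¹ := by rw [nonsing_inv_mul_cancel_left _ _ hM]
    _ = M⁻¹ * Φ := by rw [h, ← Matrix.mul_assoc, mul_nonsing_inv_cancel_right _ _ hN]

theorem one_sub_mul_transpose_mul_eq_zero [DecidableEq m] {Φ : Matrix m k R} (hΦ : Φᵀ * Φ = 1)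
    {A : Matrix m m R} {B : Matrix k k R} (h : A * Φ = Φ * B) :
    (1 - Φ * (Φᵀ * Φ)⁻¹ * Φᵀ) * A * Φ = 0 := by
  rw [hΦ, inv_one, Matrix.mul_one, Matrix.mul_assoc, Matrix.sub_mul, Matrix.one_mul,
    Matrix.mul_assoc, h, ← Matrix.mul_assoc Φᵀ, hΦ, Matrix.one_mul, sub_self]

theorem one_sub_smul_mul_eq_mul_one_sub_smul [DecidableEq m] {Φ : Matrix m k R} {A : Matrix m m R}
    {B : Matrix k k R} (h : A * Φ = Φ * B) (γ : R) : (1 - γ • A) * Φ = Φ * (1 - γ • B) := by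
  rw [Matrix.sub_mul, Matrix.mul_sub, Matrix.one_mul, Matrix.mul_one, Matrix.smul_mul,
    Matrix.mul_smul, h]

theorem sub_sub_smul_mulVec_eq_zero [DecidableEq m] {A : Matrix m m R} {γ : R}
    (hA : IsUnit (1 - γ • A)) (r : m → R) :
    (1 - γ • A)⁻¹ *ᵥ r - r - γ • (A *ᵥ ((1 - γ • A)⁻¹ *ᵥ r)) = 0 := by
  have hr : (1 - γ • A) *ᵥ ((1 - γ • A)⁻¹ *ᵥ r) = r := by
    rw [mulVec_mulVec, mul_nonsing_inv _ ((isUnit_iff_isUnit_det _).mp hA), one_mulVec]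
  rw [sub_mulVec, one_mulVec, smul_mulVec] at hr
  rw [sub_sub, sub_add_eq_sub_sub_swap, hr, sub_self]

end Matrix

theorem exists_transpose_mul_self_eq_one_range_eq {ι : Type*} [Fintype ι] {k : ℕ}
    (W : Submodule ℝ (ι → ℝ)) (hW : finrank ℝ W = k) :
    ∃ Φ : Matrix ι (Fin k) ℝ, Φᵀ * Φ = 1 ∧ LinearMap.range Φ.mulVecLin = W := by
  let e := WithLp.linearEquiv 2 ℝ (ι → ℝ)
  let W' := W.map e.symm.toLinearMap
  have hW' : finrank ℝ W' = k := (LinearEquiv.finrank_map_eq _ _).trans hW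
  let b := (stdOrthonormalBasis ℝ W').reindex (finCongr hW')
  refine ⟨Matrix.of fun i j => (b j : EuclideanSpace ℝ ι) i, ?_, ?_⟩
  · ext a c
    have := orthonormal_iff_ite.mp b.orthonormal c a
    simpa [Matrix.mul_apply, Matrix.one_apply, PiLp.inner_apply, eq_comm] using this
  · rw [range_mulVecLin]
    have hcol : Set.range (Matrix.of fun i j => (b j : EuclideanSpace ℝ ι) i).col =
        (e.toLinearMap ∘ₗ W'.subtype) '' Set.range b := by
      rw [← Set.range_comp]; rfl
    rw [hcol, Submodule.span_image, ← b.coe_toBasis, b.toBasis.span_eq, Submodule.map_top,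
      LinearMap.range_comp, Submodule.range_subtype]
    exact (Submodule.map_symm_eq_iff e).mp rfl

theorem mulVec_mem_span_image_of_eigen {R ι : Type*} [CommRing R] [Fintype ι]
    {P : Matrix ι ι R} {w : ι → ι → R} {lam : ι → R} {t : Set ι}
    (heig : ∀ i ∈ t, P *ᵥ w i = lam i • w i) {x : ι → R} (hx : x ∈ Submodule.span R (w '' t)) :
    P *ᵥ x ∈ Submodule.span R (w '' t) := by
  have hinv : Submodule.span R (w '' t) ≤ (Submodule.span R (w '' t)).comap P.mulVecLin := by
    rw [Submodule.span_le]
    rintro _ ⟨i, hi, rfl⟩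
    rw [SetLike.mem_coe, Submodule.mem_comap, mulVecLin_apply, heig i hi]
    exact Submodule.smul_mem _ _ (Submodule.subset_span ⟨i, hi, rfl⟩)
  exact hinv hx

theorem finrank_span_image_finset {R ι M : Type*} [CommRing R] [Nontrivial R]
    [StrongRankCondition R] [AddCommGroup M] [Module R M] {w : ι → M} (hw : LinearIndependent R w)
    (t : Finset ι) : finrank R (Submodule.span R (w '' t)) = t.card := by
  rw [Set.image_eq_range]
  exact (finrank_span_eq_card (hw.comp _ Subtype.val_injective)).trans (Fintype.card_coe t)

theorem stmt11_general {n : ℕ} (m k : ℕ) (hmk : m ≤ k) (hkn : k ≤ n)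
    (P : Matrix (Fin n) (Fin n) ℝ)
    (w : Fin n → Fin n → ℝ) (lam : Fin n → ℝ)
    (heig : ∀ i, P *ᵥ w i = lam i • w i)
    (hindep : LinearIndependent ℝ w)
    (γ : ℝ)
    (hinvP : IsUnit (1 - γ • P))
    (r : Fin n → ℝ) (s : Finset (Fin n)) (hs : s.card = m)
    (hr : r ∈ Submodule.span ℝ (w '' ↑s)) :
    ∃ (Φ : Matrix (Fin n) (Fin k) ℝ) (B : Matrix (Fin k) (Fin k) ℝ),
      Φᵀ * Φ = 1 ∧
      P * Φ = Φ * B ∧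
      (Φ * Φᵀ) *ᵥ r = r ∧
      IsUnit ((1 : Matrix (Fin k) (Fin k) ℝ) - γ • (Φᵀ * P * Φ)) ∧
      (1 - Φ * (Φᵀ * Φ)⁻¹ * Φᵀ) * P * Φ * ((Φᵀ * Φ)⁻¹ * Φᵀ * P * Φ)ᵀ = 0 ∧
      Φ *ᵥ ((1 - γ • (Φᵀ * P * Φ))⁻¹ *ᵥ (Φᵀ *ᵥ r)) - r -
          γ • (P *ᵥ (Φ *ᵥ ((1 - γ • (Φᵀ * P * Φ))⁻¹ *ᵥ (Φᵀ *ᵥ r)))) = 0 ∧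
      Φ *ᵥ ((1 - γ • (Φᵀ * P * Φ))⁻¹ *ᵥ (Φᵀ *ᵥ r)) = (1 - γ • P)⁻¹ *ᵥ r := by
  obtain ⟨t, hst, -, htk⟩ := Finset.exists_subsuperset_card_eq (Finset.subset_univ s)
    (hs ▸ hmk) (by simpa using hkn)
  obtain ⟨Φ, hΦ, hrange⟩ := exists_transpose_mul_self_eq_one_range_eq
    (Submodule.span ℝ (w '' t)) (htk ▸ finrank_span_image_finset hindep t)
  have hPΦ : P * Φ = Φ * (Φᵀ * P * Φ) := mul_eq_mul_transpose_mul_mul_of_mapsTo hΦ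
    (hrange ▸ fun _ => mulVec_mem_span_image_of_eigen fun i _ => heig i)
  have hrΦ : (Φ * Φᵀ) *ᵥ r = r := mul_transpose_mulVec_of_mem_range hΦ
    (hrange ▸ Submodule.span_mono (Set.image_mono hst) hr)
  have hcomm : (1 - γ • P) * Φ = Φ * (1 - γ • (Φᵀ * P * Φ)) :=
    one_sub_smul_mul_eq_mul_one_sub_smul hPΦ γ
  have hunit := isUnit_of_mul_eq_mul hΦ hinvP hcomm
  have hvalue : Φ *ᵥ ((1 - γ • (Φᵀ * P * Φ))⁻¹ *ᵥ (Φᵀ *ᵥ r)) = (1 - γ • P)⁻¹ *ᵥ r := by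
    rw [mulVec_mulVec, mulVec_mulVec, mul_nonsing_inv_eq_nonsing_inv_mul hinvP hunit hcomm,
      Matrix.mul_assoc, ← mulVec_mulVec, hrΦ]
  refine ⟨Φ, _, hΦ, hPΦ, hrΦ, hunit, ?_, hvalue ▸ sub_sub_smul_mulVec_eq_zero hinvP r, hvalue⟩
  rw [one_sub_mul_transpose_mul_eq_zero hΦ hPΦ, Matrix.zero_mul]

/-- **Existence of a joint critical point of TD and latent self-prediction with zero value
error.** Suppose `P` is real-diagonalizable with eigenvector basis `w₁,…,w_n` (eigenvalues
`λᵢ`), `γ ∈ (0,1)` with `I − γP` invertible, and `r` lies in the span of `m` of these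
eigenvectors with `m ≤ k ≤ n`. Then there exist `Φ ∈ ℝ^{n×k}` with orthonormal columns and
`B ∈ ℝ^{k×k}` such that `PΦ = ΦB`, `ΦΦᵀr = r`, `I − γΦᵀPΦ` is invertible, `Φ` is a
stationary point of the two-timescale latent self-prediction flow, and with
`V̂ = (I − γΦᵀPΦ)⁻¹Φᵀr` the TD residual vanishes and `ΦV̂ = (I − γP)⁻¹r`. -/
theorem stmt11 {n : ℕ} (m k : ℕ) (hmk : m ≤ k) (hkn : k ≤ n)
    (P : Matrix (Fin n) (Fin n) ℝ)
    (w : Fin n → Fin n → ℝ) (lam : Fin n → ℝ)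
    (heig : ∀ i, P *ᵥ w i = lam i • w i)
    (hindep : LinearIndependent ℝ w)
    (hspan : Submodule.span ℝ (Set.range w) = ⊤)
    (γ : ℝ) (hγ : γ ∈ Set.Ioo (0 : ℝ) 1)
    (hinvP : IsUnit (1 - γ • P))
    (r : Fin n → ℝ) (s : Finset (Fin n)) (hs : s.card = m)
    (hr : r ∈ Submodule.span ℝ (w '' ↑s)) :
    ∃ (Φ : Matrix (Fin n) (Fin k) ℝ) (B : Matrix (Fin k) (Fin k) ℝ),
      Φᵀ * Φ = 1 ∧
      P * Φ = Φ * B ∧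
      (Φ * Φᵀ) *ᵥ r = r ∧
      IsUnit ((1 : Matrix (Fin k) (Fin k) ℝ) - γ • (Φᵀ * P * Φ)) ∧
      (1 - Φ * (Φᵀ * Φ)⁻¹ * Φᵀ) * P * Φ * ((Φᵀ * Φ)⁻¹ * Φᵀ * P * Φ)ᵀ = 0 ∧
      Φ *ᵥ ((1 - γ • (Φᵀ * P * Φ))⁻¹ *ᵥ (Φᵀ *ᵥ r)) - r -
          γ • (P *ᵥ (Φ *ᵥ ((1 - γ • (Φᵀ * P * Φ))⁻¹ *ᵥ (Φᵀ *ᵥ r)))) = 0 ∧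
      Φ *ᵥ ((1 - γ • (Φᵀ * P * Φ))⁻¹ *ᵥ (Φᵀ *ᵥ r)) = (1 - γ • P)⁻¹ *ᵥ r :=
  stmt11_general m k hmk hkn P w lam heig hindep γ hinvP r s hs hr
end
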